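/- Let λ₁, …, λ_d be complex numbers with |λ₁| > max(1, |λ₂|, …, |λ_d|). Suppose Fix : ℕ → ℕ satisfies Fix(m) = |1 − (λ₁^m + ⋯ + λ_d^m)| for all m ≥ 1. Then there exists m₀ such that for all m ≥ m₀, Fix(m) > ∑_{k ∣ m, m/k prime, k ≠ m} Fix(k). -/

import Mathlib

/-!
Write `r = ‖λ₁‖` and pick `ρ` with `max(1, ‖λ₂‖, …, ‖λ_d‖) ≤ ρ < r`. The triangle inequality gives
`Fix m ≥ r^m - d ρ^m`, while every `k` in the sum is a proper divisor of `m`, so `k ≤ m / 2` and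
`Fix k ≤ (d + 1) r^k ≤ (d + 1) √r^m`. There are at most `m` such `k`, and
`(d + 1) (m √r^m + ρ^m) = o(r^m)`.
-/

open Finset Filter Asymptotics Topology

namespace Nat

lemma two_mul_le_of_mem_properDivisors {k n : ℕ} (h : k ∈ n.properDivisors) : 2 * k ≤ n := by
  have hn : n ≠ 0 := (one_lt_of_mem_properDivisors h).ne_bot
  obtain ⟨c, hc, rfl⟩ := (mem_properDivisors_iff_exists hn).1 h
  rw [Nat.mul_comm]
  exact Nat.mul_le_mul_left k hc

lemma filter_divisors_subset_properDivisors {n : ℕ} {p : ℕ → Prop} [DecidablePred p]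
    (hp : ∀ k, p k → k ≠ n) : n.divisors.filter p ⊆ n.properDivisors := fun k hk => by
  obtain ⟨hkn, hpk⟩ := mem_filter.1 hk
  exact mem_properDivisors.2 ⟨dvd_of_mem_divisors hkn, (divisor_le hkn).lt_of_ne (hp k hpk)⟩

lemma card_properDivisors_le_self (n : ℕ) : #n.properDivisors ≤ n :=
  (card_le_card properDivisors_subset_divisors).trans (card_divisors_le_self n)

lemma sum_properDivisors_le_mul {n : ℕ} {f : ℕ → ℝ} {B : ℝ} (hB : 0 ≤ B)
    (hf : ∀ k, 0 < k → 2 * k ≤ n → f k ≤ B) : ∑ k ∈ n.properDivisors, f k ≤ n * B :=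
  calc ∑ k ∈ n.properDivisors, f k
      ≤ #n.properDivisors • B := sum_le_card_nsmul _ _ _ fun k hk =>
        hf k (pos_of_mem_properDivisors hk) (two_mul_le_of_mem_properDivisors hk)
    _ ≤ n * B := by
        rw [nsmul_eq_mul]
        gcongr
        exact_mod_cast card_properDivisors_le_self n

end Nat

lemma Finset.exists_forall_le_lt_of_forall_lt {ι : Type*} (s : Finset ι) (f : ι → ℝ) {a r : ℝ}
    (ha : a < r) (hf : ∀ i ∈ s, f i < r) : ∃ ρ, a ≤ ρ ∧ ρ < r ∧ ∀ i ∈ s, f i ≤ ρ := by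
  have hnear : ∀ᶠ ρ in 𝓝[<] r, a < ρ ∧ ∀ i ∈ s, f i < ρ :=
    ((eventually_gt_nhds ha).and ((eventually_all_finset s).2 fun i hi =>
      eventually_gt_nhds (hf i hi))).filter_mono nhdsWithin_le_nhds
  obtain ⟨ρ, ⟨haρ, hfρ⟩, hρr⟩ := (hnear.and self_mem_nhdsWithin).exists
  exact ⟨ρ, haρ.le, hρr, fun i hi => (hfρ i hi).le⟩

section PowerSums

variable {𝕜 ι : Type*} [NormedDivisionRing 𝕜]

lemma norm_one_sub_sum_pow_le (s : Finset ι) (lam : ι → 𝕜) {R : ℝ} (hR1 : 1 ≤ R)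
    (hR : ∀ i ∈ s, ‖lam i‖ ≤ R) (k : ℕ) :
    ‖1 - ∑ i ∈ s, lam i ^ k‖ ≤ (#s + 1) * R ^ k :=
  calc ‖1 - ∑ i ∈ s, lam i ^ k‖
      ≤ ‖(1 : 𝕜)‖ + ∑ i ∈ s, ‖lam i ^ k‖ :=
        (norm_sub_le _ _).trans (add_le_add_right (norm_sum_le _ _) _)
    _ ≤ R ^ k + ∑ _i ∈ s, R ^ k := by
        gcongr with i hi
        · rw [norm_one]
          exact one_le_pow₀ hR1
        · rw [norm_pow]
          exact pow_le_pow_left₀ (norm_nonneg _) (hR i hi) k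
    _ = (#s + 1) * R ^ k := by
        rw [sum_const, nsmul_eq_mul]
        ring

lemma pow_norm_le_norm_one_sub_sum_pow_add [Fintype ι] [DecidableEq ι] (lam : ι → 𝕜) (i₀ : ι)
    {ρ : ℝ} (hρ1 : 1 ≤ ρ) (hρ : ∀ i ∈ univ.erase i₀, ‖lam i‖ ≤ ρ) (m : ℕ) :
    ‖lam i₀‖ ^ m ≤ ‖1 - ∑ i, lam i ^ m‖ + Fintype.card ι * ρ ^ m := by
  have hsplit : lam i₀ ^ m = (1 - ∑ i ∈ univ.erase i₀, lam i ^ m) - (1 - ∑ i, lam i ^ m) := by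
    rw [← add_sum_erase _ _ (mem_univ i₀)]
    abel
  have hcard : ((#(univ.erase i₀) : ℕ) : ℝ) + 1 = Fintype.card ι := by
    exact_mod_cast card_erase_add_one (mem_univ i₀)
  have hrest := norm_one_sub_sum_pow_le (univ.erase i₀) lam hρ1 hρ m
  rw [hcard] at hrest
  calc ‖lam i₀‖ ^ m = ‖lam i₀ ^ m‖ := (norm_pow _ _).symm
    _ ≤ ‖1 - ∑ i ∈ univ.erase i₀, lam i ^ m‖ + ‖1 - ∑ i, lam i ^ m‖ :=
        hsplit ▸ norm_sub_le _ _
    _ ≤ ‖1 - ∑ i, lam i ^ m‖ + Fintype.card ι * ρ ^ m := by linarith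

end PowerSums

lemma eventually_mul_add_lt_pow {C t ρ r : ℝ} (ht : 0 ≤ t) (htr : t < r) (hρ : 0 ≤ ρ)
    (hρr : ρ < r) : ∀ᶠ m : ℕ in atTop, C * (m * t ^ m + ρ ^ m) < r ^ m := by
  have hr : 0 < r := ht.trans_lt htr
  have ho : (fun m : ℕ => C * (m * t ^ m + ρ ^ m)) =o[atTop] fun m => r ^ m := by
    refine IsLittleO.const_mul_left (IsLittleO.add ?_ (isLittleO_pow_pow_of_lt_left hρ hρr)) C
    simpa using isLittleO_pow_const_mul_const_pow_const_pow_of_norm_lt 1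
      (r₁ := t) (by rwa [Real.norm_of_nonneg ht])
  filter_upwards [ho.bound one_half_pos] with m hm
  have hrm : 0 < r ^ m := pow_pos hr m
  rw [Real.norm_of_nonneg hrm.le, Real.norm_eq_abs] at hm
  linarith [le_abs_self (C * (m * t ^ m + ρ ^ m))]

theorem stmt_14 (d : ℕ) (hd : 0 < d) (lam : Fin d → ℂ)
    (h1 : 1 < ‖lam ⟨0, hd⟩‖)
    (hgap : ∀ i : Fin d, i ≠ ⟨0, hd⟩ → ‖lam i‖ < ‖lam ⟨0, hd⟩‖)
    (Fix : ℕ → ℕ)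
    (hFix : ∀ m : ℕ, 1 ≤ m → (Fix m : ℝ) = ‖1 - ∑ i, lam i ^ m‖) :
    ∃ m₀ : ℕ, ∀ m : ℕ, m₀ ≤ m →
      (∑ k ∈ m.divisors.filter (fun k => k ≠ m ∧ (m / k).Prime), Fix k) < Fix m := by
  set i₀ : Fin d := ⟨0, hd⟩
  set r := ‖lam i₀‖
  obtain ⟨ρ, hρ1, hρr, hρ⟩ := (univ.erase i₀).exists_forall_le_lt_of_forall_lt (‖lam ·‖) h1
    fun i hi => hgap i (ne_of_mem_erase hi)
  have hr : ∀ i ∈ univ, ‖lam i‖ ≤ r := fun i _ =>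
    if h : i = i₀ then h ▸ le_rfl else (hgap i h).le
  have ht1 : 1 ≤ √r := Real.one_le_sqrt.2 h1.le
  have hsmall : ∀ m k, 0 < k → 2 * k ≤ m → (Fix k : ℝ) ≤ (d + 1) * √r ^ m := fun m k hk hkm =>
    calc (Fix k : ℝ) ≤ (#univ + 1) * r ^ k :=
          hFix k hk ▸ norm_one_sub_sum_pow_le univ lam h1.le hr k
      _ = (d + 1) * √r ^ (2 * k) := by
          rw [card_univ, Fintype.card_fin, pow_mul, Real.sq_sqrt (zero_le_one.trans h1.le)]
      _ ≤ (d + 1) * √r ^ m := by gcongr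
  have hlarge : ∀ m, 1 ≤ m → r ^ m ≤ Fix m + d * ρ ^ m := fun m hm => by
    simpa [hFix m hm] using pow_norm_le_norm_one_sub_sum_pow_add lam i₀ hρ1 hρ m
  refine eventually_atTop.1 ?_
  filter_upwards [eventually_mul_add_lt_pow (C := d + 1) (zero_le_one.trans ht1)
    (Real.sqrt_lt_self_iff.2 h1) (zero_le_one.trans hρ1) hρr, eventually_ge_atTop 1]
    with m hm hm1
  have hproper := Nat.sum_properDivisors_le_mul (by positivity) (hsmall m)
  have hfilter : ∑ k ∈ m.divisors.filter (fun k => k ≠ m ∧ (m / k).Prime), (Fix k : ℝ)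
      ≤ ∑ k ∈ m.properDivisors, (Fix k : ℝ) :=
    sum_le_sum_of_subset_of_nonneg (Nat.filter_divisors_subset_properDivisors fun k hk => hk.1)
      fun k _ _ => Nat.cast_nonneg (Fix k)
  rw [← Nat.cast_lt (α := ℝ), Nat.cast_sum]
  linarith [hlarge m hm1, pow_nonneg (zero_le_one.trans hρ1) m]
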